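/- Let C_π be the π-system generated by a finite collection C of subsets of V (smallest collection containing C and closed under pairwise intersection). In the full power-set diagram G^M_0 with V^M_0 = {v : v ⊆ c for some c in C} and all containment edges, every node v in V^M_0 \ C_π is a redundant node; in particular, for such v, all incoming edges (p → v) in E^M_0 are pairwise equivalent. -/
import Mathlib

open Finset

/-- Restriction of a sub-assignment on `c` to a subset `s` (arbitrary values
outside `c`, only meaningful when `s ⊆ c`). -/
noncomputable def restr {V : Type*} [DecidableEq V] {X : V → Type*}
    [∀ i, Nonempty (X i)] (c s : Finset V) (x : (i : c) → X i.1) :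
    (i : s) → X i.1 :=
  fun i => if h : i.1 ∈ c then x ⟨i.1, h⟩ else Classical.arbitrary _

/-- The marginalisation constraint `∑_{x_{c\s}} μ_c(x_c) = μ_s(x_s)`. -/
noncomputable def marg {V : Type*} [DecidableEq V] {X : V → Type*}
    [∀ i, Fintype (X i)] [∀ i, Nonempty (X i)] [∀ i, DecidableEq (X i)]
    (c s : Finset V) (μc : ((i : c) → X i.1) → ℝ)
    (μs : ((i : s) → X i.1) → ℝ) : Prop :=
  ∀ y : (i : s) → X i.1,
    ∑ x ∈ Finset.univ.filter (fun x => restr c s x = y), μc x = μs y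

/-- The π-system generated by a collection `C` of subsets: the smallest
collection containing `C` and closed under pairwise intersection. -/
def piGen {V : Type*} [DecidableEq V] (C : Finset (Finset V)) : Set (Finset V) :=
  ⋂₀ {P : Set (Finset V) | ↑C ⊆ P ∧ ∀ a ∈ P, ∀ b ∈ P, a ∩ b ∈ P}

section Aux
variable {V : Type*} [DecidableEq V] {X : V → Type*}
    [∀ i, Fintype (X i)] [∀ i, Nonempty (X i)] [∀ i, DecidableEq (X i)]

lemma restr_comp (c s v : Finset V) (hvs : v ⊆ s) (hsc : s ⊆ c)
    (x : (i : c) → X i.1) : restr s v (restr c s x) = restr c v x := by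
  funext i
  have h1 : i.1 ∈ s := hvs i.2
  have h2 : i.1 ∈ c := hsc h1
  simp [restr, h1, h2]

lemma restr_self (c : Finset V) (x : (i : c) → X i.1) : restr c c x = x := by
  funext i
  simp [restr, i.2]

lemma marg_refl (c : Finset V) (μ : ((i : c) → X i.1) → ℝ) : marg c c μ μ := by
  intro y
  have : (Finset.univ.filter (fun x => restr c c x = y)) = {y} := by
    ext x; simp [restr_self]
  rw [this, Finset.sum_singleton]

lemma sum_split (c s v : Finset V) (hvs : v ⊆ s) (hsc : s ⊆ c)
    (μ : ((i : c) → X i.1) → ℝ) (y : (i : v) → X i.1) :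
    ∑ z ∈ Finset.univ.filter (fun z => restr s v z = y),
      ∑ x ∈ Finset.univ.filter (fun x => restr c s x = z), μ x
    = ∑ x ∈ Finset.univ.filter (fun x => restr c v x = y), μ x := by
  rw [Finset.sum_fiberwise_eq_sum_filter]
  apply Finset.sum_congr
  · ext x
    simp [restr_comp c s v hvs hsc]
  · intros; rfl

lemma marg_trans (c s v : Finset V) (hvs : v ⊆ s) (hsc : s ⊆ c)
    {μc : ((i : c) → X i.1) → ℝ} {μs : ((i : s) → X i.1) → ℝ}
    {μv : ((i : v) → X i.1) → ℝ}
    (h1 : marg c s μc μs) (h2 : marg s v μs μv) :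
    marg c v μc μv := by
  intro y
  rw [← sum_split c s v hvs hsc μc y]
  rw [← h2 y]
  exact Finset.sum_congr rfl fun z _ => h1 z

lemma marg_cancel (c s v : Finset V) (hvs : v ⊆ s) (hsc : s ⊆ c)
    {μc : ((i : c) → X i.1) → ℝ} {μs : ((i : s) → X i.1) → ℝ}
    {μv : ((i : v) → X i.1) → ℝ}
    (h1 : marg c s μc μs) (h2 : marg c v μc μv) :
    marg s v μs μv := by
  intro y
  calc ∑ z ∈ Finset.univ.filter (fun z => restr s v z = y), μs z
      = ∑ z ∈ Finset.univ.filter (fun z => restr s v z = y),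
          ∑ x ∈ Finset.univ.filter (fun x => restr c s x = z), μc x :=
        Finset.sum_congr rfl fun z _ => (h1 z).symm
    _ = _ := sum_split c s v hvs hsc μc y
    _ = μv y := h2 y

lemma subset_piGen (C : Finset (Finset V)) : ↑C ⊆ piGen C :=
  fun c hc => Set.mem_sInter.2 fun _ hP => hP.1 hc

lemma piGen_inter (C : Finset (Finset V)) {a b} (ha : a ∈ piGen C)
    (hb : b ∈ piGen C) : a ∩ b ∈ piGen C :=
  Set.mem_sInter.2 fun P hP => hP.2 a (ha P hP) b (hb P hP)

end Aux

section Main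
variable {V : Type*} [DecidableEq V] {X : V → Type*}
    [∀ i, Fintype (X i)] [∀ i, Nonempty (X i)] [∀ i, DecidableEq (X i)]

lemma key (C : Finset (Finset V)) (v : Finset V)
    (hv : v ∈ {v : Finset V | ∃ c ∈ C, v ⊆ c}) (hvpi : v ∉ piGen C)
    (p1 p2 : Finset V)
    (hp1 : (p1, v) ∈ {e : Finset V × Finset V |
        e.1 ∈ {v : Finset V | ∃ c ∈ C, v ⊆ c}
        ∧ e.2 ∈ {v : Finset V | ∃ c ∈ C, v ⊆ c} ∧ e.2 ⊂ e.1})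
    (hp2 : (p2, v) ∈ {e : Finset V × Finset V |
        e.1 ∈ {v : Finset V | ∃ c ∈ C, v ⊆ c}
        ∧ e.2 ∈ {v : Finset V | ∃ c ∈ C, v ⊆ c} ∧ e.2 ⊂ e.1})
    (μ : ∀ a : Finset V, ((i : a) → X i.1) → ℝ)
    (hother : ∀ e ∈ {e : Finset V × Finset V |
        e.1 ∈ {v : Finset V | ∃ c ∈ C, v ⊆ c}
        ∧ e.2 ∈ {v : Finset V | ∃ c ∈ C, v ⊆ c} ∧ e.2 ⊂ e.1},
      e.2 ≠ v → marg e.1 e.2 (μ e.1) (μ e.2))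
    (h1 : marg p1 v (μ p1) (μ v)) : marg p2 v (μ p2) (μ v) := by
  classical
  -- the set of factors containing v
  set Cv : Finset (Finset V) := C.filter (fun c => v ⊆ c) with hCv
  obtain ⟨c0, hc0C, hc0⟩ := hv
  have hne : Cv.Nonempty := ⟨c0, by simp [hCv, hc0C, hc0]⟩
  set s : Finset V := Cv.inf' hne id with hs
  have hsmem : s ∈ piGen C := by
    refine Finset.inf'_mem (piGen C) (fun a ha b hb => ?_) Cv hne id
      (fun c hc => subset_piGen C (by simpa using (Finset.mem_filter.1 hc).1))
    exact piGen_inter C ha hb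
  have hvs : v ⊆ s := Finset.le_inf' hne id fun c hc => (Finset.mem_filter.1 hc).2
  have hvnes : v ≠ s := fun h => hvpi (h ▸ hsmem)
  have hsVM : s ∈ {v : Finset V | ∃ c ∈ C, v ⊆ c} :=
    ⟨c0, hc0C, Finset.inf'_le id (Finset.mem_filter.2 ⟨hc0C, hc0⟩)⟩
  -- marginalisation between any comparable nodes with target ≠ v
  have getmarg : ∀ a b : Finset V, a ∈ {v : Finset V | ∃ c ∈ C, v ⊆ c} →
      b ∈ {v : Finset V | ∃ c ∈ C, v ⊆ c} → b ⊆ a → b ≠ v →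
      marg a b (μ a) (μ b) := by
    intro a b ha hb hba hbv
    rcases eq_or_ne b a with rfl | hne'
    · exact marg_refl b (μ b)
    · exact hother (a, b) ⟨ha, hb, hba, fun h => hne' (Finset.Subset.antisymm hba h)⟩ hbv
  have snev : s ≠ v := fun h => hvnes h.symm
  -- from (p, v) edge get a factor c ∈ C with p ⊆ c, s ⊆ c ⊆ …
  have getc : ∀ p : Finset V, (p, v) ∈ {e : Finset V × Finset V |
      e.1 ∈ {v : Finset V | ∃ c ∈ C, v ⊆ c}
      ∧ e.2 ∈ {v : Finset V | ∃ c ∈ C, v ⊆ c} ∧ e.2 ⊂ e.1} →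
      ∃ c, c ∈ {v : Finset V | ∃ c ∈ C, v ⊆ c} ∧ p ⊆ c ∧ s ⊆ c ∧ v ⊆ p ∧ p ≠ v := by
    intro p hp
    obtain ⟨⟨c, hcC, hpc⟩, _, hvp⟩ := hp
    have hcCv : c ∈ Cv := Finset.mem_filter.2 ⟨hcC, hvp.1.trans hpc⟩
    exact ⟨c, ⟨c, hcC, subset_rfl⟩, hpc, Finset.inf'_le id hcCv, hvp.1,
      fun h => hvp.2 (h ▸ subset_rfl)⟩
  obtain ⟨c1, hc1VM, hp1c1, hsc1, hvp1, hp1v⟩ := getc p1 hp1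
  obtain ⟨c2, hc2VM, hp2c2, hsc2, hvp2, hp2v⟩ := getc p2 hp2
  have mc1p1 : marg c1 p1 (μ c1) (μ p1) := getmarg c1 p1 hc1VM hp1.1 hp1c1 hp1v
  have mc1v : marg c1 v (μ c1) (μ v) := marg_trans c1 p1 v hvp1 hp1c1 mc1p1 h1
  have mc1s : marg c1 s (μ c1) (μ s) := getmarg c1 s hc1VM hsVM hsc1 snev
  have msv : marg s v (μ s) (μ v) := marg_cancel c1 s v hvs hsc1 mc1s mc1v
  have mc2s : marg c2 s (μ c2) (μ s) := getmarg c2 s hc2VM hsVM hsc2 snev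
  have mc2v : marg c2 v (μ c2) (μ v) := marg_trans c2 s v hvs hsc2 mc2s msv
  have mc2p2 : marg c2 p2 (μ c2) (μ p2) := getmarg c2 p2 hc2VM hp2.1 hp2c2 hp2v
  exact marg_cancel c2 p2 v hvp2 hp2c2 mc2p2 mc2v

end Main

/-- In the full power-set diagram `G^M_0`, every node outside the π-system
generated by `C` is redundant: all its incoming edges are pairwise equivalent. -/
theorem pi_system_redundant_nodes {V : Type*} [DecidableEq V] {X : V → Type*}
    [∀ i, Fintype (X i)] [∀ i, Nonempty (X i)] [∀ i, DecidableEq (X i)]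
    (C : Finset (Finset V)) :
    ∀ v ∈ {v : Finset V | ∃ c ∈ C, v ⊆ c}, v ∉ piGen C →
      ∀ p1 p2 : Finset V,
        (p1, v) ∈ {e : Finset V × Finset V |
            e.1 ∈ {v : Finset V | ∃ c ∈ C, v ⊆ c}
            ∧ e.2 ∈ {v : Finset V | ∃ c ∈ C, v ⊆ c} ∧ e.2 ⊂ e.1} →
        (p2, v) ∈ {e : Finset V × Finset V |
            e.1 ∈ {v : Finset V | ∃ c ∈ C, v ⊆ c}
            ∧ e.2 ∈ {v : Finset V | ∃ c ∈ C, v ⊆ c} ∧ e.2 ⊂ e.1} →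
        {μ : ∀ a : Finset V, ((i : a) → X i.1) → ℝ |
            (∀ e ∈ {e : Finset V × Finset V |
                e.1 ∈ {v : Finset V | ∃ c ∈ C, v ⊆ c}
                ∧ e.2 ∈ {v : Finset V | ∃ c ∈ C, v ⊆ c} ∧ e.2 ⊂ e.1},
              e.2 ≠ v → marg e.1 e.2 (μ e.1) (μ e.2))
            ∧ marg p1 v (μ p1) (μ v)}
        = {μ : ∀ a : Finset V, ((i : a) → X i.1) → ℝ |
            (∀ e ∈ {e : Finset V × Finset V |
                e.1 ∈ {v : Finset V | ∃ c ∈ C, v ⊆ c}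
                ∧ e.2 ∈ {v : Finset V | ∃ c ∈ C, v ⊆ c} ∧ e.2 ⊂ e.1},
              e.2 ≠ v → marg e.1 e.2 (μ e.1) (μ e.2))
            ∧ marg p2 v (μ p2) (μ v)} := by
  intro v hv hvpi p1 p2 hp1 hp2
  ext μ
  constructor
  · rintro ⟨hoth, h1⟩
    exact ⟨hoth, key C v hv hvpi p1 p2 hp1 hp2 μ hoth h1⟩
  · rintro ⟨hoth, h2⟩
    exact ⟨hoth, key C v hv hvpi p2 p1 hp2 hp1 μ hoth h2⟩
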